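/- arXiv:2605.06784 — 3 statements merged into one kernel-verified Lean document; each statement's English description precedes it below -/
import Mathlib

section
/- Feasibility of states: for every state μ on X and every finite patch P ⊂ Γ and level r ≥ 1, the moment sequence y^μ defined by y^μ_{[α]} = ∫_X m_α dμ is well defined (the integral depends only on the translation class [α]) and lies in F_{P,r}. Consequently ε_{P,r} ≤ ε* whenever every monomial of E has a translate in B_{P,2r}. -/
open MeasureTheory Filter

noncomputable section

namespace SpinBootstrap

/-- The unit sphere `S² ⊂ ℝ³`. -/
abbrev Sphere : Type := {v : EuclideanSpace ℝ (Fin 3) // ‖v‖ = 1}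

variable (d ns : ℕ)

/-- Lattice sites `Γ = ℤ^d × {1,…,n_s}`. -/
abbrev Site : Type := (Fin d → ℤ) × Fin ns

/-- Spin configurations `X = (S²)^Γ`. -/
abbrev Config : Type := Site d ns → Sphere

/-- The `a`-th Cartesian component of the spin at site `i`. -/
def comp (s : Config d ns) (i : Site d ns) (a : Fin 3) : ℝ :=
  (s i : EuclideanSpace ℝ (Fin 3)) a

/-- Multi-indices: finitely supported functions `α : Γ × {x,y,z} → ℕ`. -/
abbrev MultiIdx : Type := (Site d ns × Fin 3) →₀ ℕ

/-- Total degree `|α|`. -/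
def degree (α : MultiIdx d ns) : ℕ := α.sum fun _ k => k

/-- The monomial `m_α`. -/
def mon (α : MultiIdx d ns) (s : Config d ns) : ℝ :=
  α.prod fun p k => comp d ns s p.1 p.2 ^ k

/-- Translation of sites by `t ∈ ℤ^d`. -/
def shiftSite (t : Fin d → ℤ) (i : Site d ns) : Site d ns := (i.1 + t, i.2)

/-- Translation of sites, as an equivalence. -/
def shiftSiteEquiv (t : Fin d → ℤ) : Site d ns ≃ Site d ns where
  toFun := shiftSite d ns t
  invFun := shiftSite d ns (-t)
  left_inv := fun i => by simp [shiftSite]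
  right_inv := fun i => by simp [shiftSite]

/-- Translation acting on multi-indices. -/
def shiftIdx (t : Fin d → ℤ) (α : MultiIdx d ns) : MultiIdx d ns :=
  Finsupp.equivMapDomain ((shiftSiteEquiv d ns t).prodCongr (Equiv.refl (Fin 3))) α

/-- Translation acting on configurations. -/
def shiftConf (t : Fin d → ℤ) (s : Config d ns) : Config d ns :=
  fun i => s (shiftSite d ns (-t) i)

/-- A state: a translation-invariant Borel probability measure on `X`. -/
def IsState (μ : Measure (Config d ns)) : Prop :=
  IsProbabilityMeasure μ ∧ ∀ t : Fin d → ℤ, Measure.map (shiftConf d ns t) μ = μ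

/-- `B_{P,r}`: multi-indices supported in the patch `P` of degree at most `r`. -/
def BSet (P : Finset (Site d ns)) (r : ℕ) : Set (MultiIdx d ns) :=
  {α | (∀ p ∈ α.support, p.1 ∈ P) ∧ degree d ns α ≤ r}

/-- The feasible set `F_{P,r} ⊆ Y = [-1,1]^𝒞`, with elements of `Y` represented as
translation-invariant, `[-1,1]`-valued functions on multi-indices. -/
def Feasible (P : Finset (Site d ns)) (r : ℕ) (y : MultiIdx d ns → ℝ) : Prop :=
  (∀ α, y α ∈ Set.Icc (-1 : ℝ) 1) ∧
  (∀ (t : Fin d → ℤ) (α : MultiIdx d ns), y (shiftIdx d ns t α) = y α) ∧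
  y 0 = 1 ∧
  (∀ c : MultiIdx d ns →₀ ℝ, (∀ α ∈ c.support, α ∈ BSet d ns P r) →
    0 ≤ ∑ α ∈ c.support, ∑ β ∈ c.support, c α * c β * y (α + β)) ∧
  (∀ i ∈ P, ∀ α β : MultiIdx d ns, α ∈ BSet d ns P (r - 1) → β ∈ BSet d ns P (r - 1) →
    ∑ a : Fin 3, y (α + β + Finsupp.single (i, a) 2) = y (α + β))

variable (M : ℕ) (a : Fin M → ℝ) (idx : Fin M → MultiIdx d ns)

/-- The objective `⟨E⟩_y = Σ_j a_j y_{[α_j]}`. -/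
def energyVal (y : MultiIdx d ns → ℝ) : ℝ := ∑ j, a j * y (idx j)

/-- The energy density `E = Σ_j a_j m_{α_j}` as a function on configuration space. -/
def energyFn (s : Config d ns) : ℝ := ∑ j, a j * mon d ns (idx j) s

/-- The SDP lower bound `ε_{P,r}`. -/
def epsSDP (P : Finset (Site d ns)) (r : ℕ) : ℝ :=
  sInf {e | ∃ y, Feasible d ns P r y ∧ e = energyVal d ns M a idx y}

/-- The ground state energy density `ε*`. -/
def epsStar : ℝ :=
  sInf {e | ∃ μ : Measure (Config d ns), IsState d ns μ ∧ e = ∫ s, energyFn d ns M a idx s ∂μ}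

/-! Spins are unit vectors, so every monomial `m_α` is a measurable function with `|m_α| ≤ 1`,
and the moments of a probability measure lie in `[-1, 1]`. Shifting a multi-index by `t` is the
same as shifting the configuration by `-t`, so invariance of a state makes its moments
translation invariant. The moment matrix is the Gram matrix of the monomials in `L²(μ)`, hence
positive semidefinite, and the sphere constraint `Σ_a (s_i^a)² = 1` gives the localizing
equalities. Finally `⟨E⟩_{y^μ} = ∫ E dμ`, and `⟨E⟩_y ≥ -Σ_j |a_j|` on the feasible set (so that
`sInf` there is a genuine infimum and not the junk value `0`), hence `ε_{P,r}` is at most the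
energy of every state. -/

lemma sum_comp_sq (s : Config d ns) (i : Site d ns) : ∑ a : Fin 3, comp d ns s i a ^ 2 = 1 := by
  simpa [comp, (s i).2] using
    (EuclideanSpace.real_norm_sq_eq (s i : EuclideanSpace ℝ (Fin 3))).symm

lemma abs_comp_le_one (s : Config d ns) (i : Site d ns) (a : Fin 3) : |comp d ns s i a| ≤ 1 :=
  (s i).2 ▸ PiLp.norm_apply_le (s i : EuclideanSpace ℝ (Fin 3)) a

lemma measurable_comp (i : Site d ns) (a : Fin 3) :
    Measurable fun s : Config d ns => comp d ns s i a :=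
  ((EuclideanSpace.proj (𝕜 := ℝ) a).continuous.measurable.comp measurable_subtype_coe).comp
    (measurable_pi_apply i)

lemma measurable_mon (α : MultiIdx d ns) : Measurable (mon d ns α) :=
  Finset.measurable_prod _ fun p _ => (measurable_comp d ns p.1 p.2).pow_const _

lemma abs_mon_le_one (α : MultiIdx d ns) (s : Config d ns) : |mon d ns α s| ≤ 1 := by
  rw [mon, Finsupp.prod, Finset.abs_prod]
  exact Finset.prod_le_one (fun _ _ => abs_nonneg _) fun p _ =>
    (abs_pow _ _).trans_le (pow_le_one₀ (abs_nonneg _) (abs_comp_le_one d ns s p.1 p.2))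

lemma integrable_mon (μ : Measure (Config d ns)) [IsFiniteMeasure μ] (α : MultiIdx d ns) :
    Integrable (mon d ns α) μ :=
  (integrable_const 1).mono' (measurable_mon d ns α).aestronglyMeasurable
    (ae_of_all _ fun s => (abs_mon_le_one d ns α s : ‖mon d ns α s‖ ≤ 1))

lemma mon_zero (s : Config d ns) : mon d ns 0 s = 1 :=
  Finsupp.prod_zero_index

lemma mon_add (α β : MultiIdx d ns) (s : Config d ns) :
    mon d ns (α + β) s = mon d ns α s * mon d ns β s :=
  Finsupp.prod_add_index' (fun _ => pow_zero _) fun _ _ _ => pow_add _ _ _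

lemma mon_single (p : Site d ns × Fin 3) (k : ℕ) (s : Config d ns) :
    mon d ns (Finsupp.single p k) s = comp d ns s p.1 p.2 ^ k :=
  Finsupp.prod_single_index (pow_zero _)

lemma mon_shiftIdx (t : Fin d → ℤ) (α : MultiIdx d ns) (s : Config d ns) :
    mon d ns (shiftIdx d ns t α) s = mon d ns α (shiftConf d ns (-t) s) := by
  rw [mon, shiftIdx, Finsupp.prod_equivMapDomain]
  exact Finsupp.prod_congr fun p _ => by simp [comp, shiftConf, shiftSite, shiftSiteEquiv]

lemma measurable_shiftConf (t : Fin d → ℤ) : Measurable (shiftConf d ns t) :=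
  measurable_pi_lambda _ fun _ => measurable_pi_apply _

/-- The moment sequence `y^μ_α = ∫ m_α dμ`. -/
def moments (μ : Measure (Config d ns)) (α : MultiIdx d ns) : ℝ :=
  ∫ s, mon d ns α s ∂μ

lemma moments_shiftIdx {μ : Measure (Config d ns)} (hμ : IsState d ns μ) (t : Fin d → ℤ)
    (α : MultiIdx d ns) : moments d ns μ (shiftIdx d ns t α) = moments d ns μ α := by
  have := hμ.1
  calc moments d ns μ (shiftIdx d ns t α)
      = ∫ s, mon d ns α s ∂(μ.map (shiftConf d ns (-t))) := by
        simp_rw [moments, mon_shiftIdx]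
        exact (integral_map (measurable_shiftConf d ns (-t)).aemeasurable
          (measurable_mon d ns α).aestronglyMeasurable).symm
    _ = moments d ns μ α := by rw [hμ.2 (-t), moments]

lemma moments_mem_Icc (μ : Measure (Config d ns)) [IsProbabilityMeasure μ]
    (α : MultiIdx d ns) : moments d ns μ α ∈ Set.Icc (-1 : ℝ) 1 := by
  have h := norm_integral_le_of_norm_le_const (μ := μ) (f := mon d ns α) (C := 1)
    (ae_of_all _ fun s => abs_mon_le_one d ns α s)
  rw [probReal_univ, mul_one, Real.norm_eq_abs] at h
  exact abs_le.mp h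

lemma moments_zero (μ : Measure (Config d ns)) [IsProbabilityMeasure μ] :
    moments d ns μ 0 = 1 := by
  simp [moments, mon_zero]

lemma sum_sum_mul_integral_mul_nonneg {Ω ι : Type*} [MeasurableSpace Ω] (μ : Measure Ω)
    (s : Finset ι) (c : ι → ℝ) (f : ι → Ω → ℝ)
    (hf : ∀ i ∈ s, ∀ j ∈ s, Integrable (fun x => f i x * f j x) μ) :
    0 ≤ ∑ i ∈ s, ∑ j ∈ s, c i * c j * ∫ x, f i x * f j x ∂μ := by
  have hsq : ∀ x, (∑ i ∈ s, c i * f i x) ^ 2 = ∑ i ∈ s, ∑ j ∈ s, c i * c j * (f i x * f j x) :=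
    fun x => by
      rw [sq, Finset.sum_mul_sum]
      exact Finset.sum_congr rfl fun i _ => Finset.sum_congr rfl fun j _ => by ring
  calc 0 ≤ ∫ x, (∑ i ∈ s, c i * f i x) ^ 2 ∂μ := integral_nonneg fun _ => sq_nonneg _
    _ = ∑ i ∈ s, ∑ j ∈ s, c i * c j * ∫ x, f i x * f j x ∂μ := by
      simp_rw [hsq]
      rw [integral_finsetSum _ fun i hi =>
        integrable_finsetSum _ fun j hj => (hf i hi j hj).const_mul _]
      refine Finset.sum_congr rfl fun i hi => ?_
      rw [integral_finsetSum _ fun j hj => (hf i hi j hj).const_mul _]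
      exact Finset.sum_congr rfl fun j _ => integral_const_mul _ _

lemma moments_quadratic_form_nonneg (μ : Measure (Config d ns)) [IsFiniteMeasure μ]
    (c : MultiIdx d ns →₀ ℝ) :
    0 ≤ ∑ α ∈ c.support, ∑ β ∈ c.support, c α * c β * moments d ns μ (α + β) := by
  simp_rw [moments, mon_add]
  exact sum_sum_mul_integral_mul_nonneg μ c.support c (mon d ns) fun α _ β _ => by
    simpa only [← mon_add] using integrable_mon d ns μ (α + β)

lemma sum_moments_add_single_two (μ : Measure (Config d ns)) [IsFiniteMeasure μ]
    (γ : MultiIdx d ns) (i : Site d ns) :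
    ∑ a : Fin 3, moments d ns μ (γ + Finsupp.single (i, a) 2) = moments d ns μ γ := by
  have hpt : ∀ s, ∑ a : Fin 3, mon d ns (γ + Finsupp.single (i, a) 2) s = mon d ns γ s := by
    intro s
    simp_rw [mon_add, mon_single, ← Finset.mul_sum, sum_comp_sq, mul_one]
  rw [moments, ← integral_congr_ae (ae_of_all μ hpt),
    integral_finsetSum _ fun a _ => integrable_mon d ns μ _]
  rfl

lemma feasible_moments {μ : Measure (Config d ns)} (hμ : IsState d ns μ)
    (P : Finset (Site d ns)) (r : ℕ) : Feasible d ns P r (moments d ns μ) := by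
  have := hμ.1
  exact ⟨moments_mem_Icc d ns μ, moments_shiftIdx d ns hμ, moments_zero d ns μ,
    fun c _ => moments_quadratic_form_nonneg d ns μ c,
    fun i _ α β _ _ => sum_moments_add_single_two d ns μ (α + β) i⟩

lemma energyVal_moments (μ : Measure (Config d ns)) [IsFiniteMeasure μ] :
    energyVal d ns M a idx (moments d ns μ) = ∫ s, energyFn d ns M a idx s ∂μ := by
  unfold energyFn
  rw [integral_finsetSum _ fun j _ => (integrable_mon d ns μ (idx j)).const_mul _]
  exact Finset.sum_congr rfl fun j _ => (integral_const_mul _ _).symm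

lemma neg_sum_abs_le_energyVal {y : MultiIdx d ns → ℝ}
    (hy : ∀ α, y α ∈ Set.Icc (-1 : ℝ) 1) : -∑ j, |a j| ≤ energyVal d ns M a idx y := by
  rw [energyVal, ← Finset.sum_neg_distrib]
  refine Finset.sum_le_sum fun j _ => neg_le_of_abs_le ?_
  rw [abs_mul]
  exact mul_le_of_le_one_right (abs_nonneg _) (abs_le.mpr (hy (idx j)))

lemma epsSDP_le_integral_energyFn (P : Finset (Site d ns)) (r : ℕ)
    {μ : Measure (Config d ns)} (hμ : IsState d ns μ) :
    epsSDP d ns M a idx P r ≤ ∫ s, energyFn d ns M a idx s ∂μ := by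
  have := hμ.1
  have hbdd : BddBelow {e | ∃ y, Feasible d ns P r y ∧ e = energyVal d ns M a idx y} := by
    refine ⟨-∑ j, |a j|, ?_⟩
    rintro e ⟨y, hy, rfl⟩
    exact neg_sum_abs_le_energyVal d ns M a idx hy.1
  exact (csInf_le hbdd ⟨_, feasible_moments d ns hμ P r, rfl⟩).trans_eq
    (energyVal_moments d ns M a idx μ)

theorem state_feasible
    (μ : Measure (Config d ns)) (hμ : IsState d ns μ)
    (P : Finset (Site d ns)) (r : ℕ) :
    (∀ (t : Fin d → ℤ) (α : MultiIdx d ns),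
      ∫ s, mon d ns (shiftIdx d ns t α) s ∂μ = ∫ s, mon d ns α s ∂μ) ∧
    Feasible d ns P r (fun α => ∫ s, mon d ns α s ∂μ) ∧
    ((∀ j : Fin M, ∃ t : Fin d → ℤ, shiftIdx d ns t (idx j) ∈ BSet d ns P (2 * r)) →
      epsSDP d ns M a idx P r ≤ epsStar d ns M a idx) :=
  ⟨moments_shiftIdx d ns hμ, feasible_moments d ns hμ P r, fun _ =>
    le_csInf ⟨_, μ, hμ, rfl⟩ <| by
      rintro _ ⟨ν, hν, rfl⟩
      exact epsSDP_le_integral_energyFn d ns M a idx P r hν⟩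

end SpinBootstrap
end
end

section
/- Luttinger–Tisza lower bound from positive definiteness (Bochner step): let J : ℤ^d → ℝ be finitely supported with J(−R) = J(R) for all R, and let g : ℤ^d → ℝ be a positive semidefinite function with g(0) = 1, i.e. for every finitely supported c : ℤ^d → ℝ one has Σ_{R,R'} c_R c_{R'} g(R'−R) ≥ 0. Then Σ_R J(R) g(R) ≥ inf_{k ∈ ℝ^d} Ĵ(k), where Ĵ(k) := Σ_R J(R) cos(k·R). -/
/-!
Put `m = inf Ĵ` and `K = J - m δ₀`; then `K` is symmetric with `K̂ = Ĵ - m ≥ 0`, and since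
`g 0 = 1` the claim is `Σ_T K(T) g(T) ≥ 0`. On a grid of `M^d` frequencies with `M` large,
`K(D)` is recovered from `K̂` by a discrete cosine inversion, so for a finite set `s` the sum
`Σ_{x,y ∈ s} K(y - x) g(y - x)` is a nonnegative combination of the forms
`Σ_{x,y ∈ s} cos(k·(y - x)) g(y - x)`, which are `≥ 0` by testing positive semidefiniteness of
`g` against `cos(k·x)` and `sin(k·x)`. For `s` the cube of side `N` this sum equals
`Σ_T K(T) g(T) ∏_j (N - |T_j|)`; divide by `N^d` and let `N → ∞`.
-/

noncomputable section

/-- The Fourier transform `Ĵ(k) = Σ_R J(R) cos(k·R)` of a finitely supported coupling. -/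
def Jhat (d : ℕ) (J : (Fin d → ℤ) →₀ ℝ) (k : Fin d → ℝ) : ℝ :=
  ∑ R ∈ J.support, J R * Real.cos (∑ j, k j * (R j : ℝ))

open Finset Real Filter Topology

def PosSemidefFun {G : Type*} [AddGroup G] (g : G → ℝ) : Prop :=
  ∀ c : G →₀ ℝ, 0 ≤ ∑ R ∈ c.support, ∑ R' ∈ c.support, c R * c R' * g (R' - R)

namespace PosSemidefFun

variable {G : Type*} [AddCommGroup G] {g : G → ℝ}

theorem sum_sum_mul_nonneg (hg : PosSemidefFun g) (s : Finset G) (c : G → ℝ) :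
    0 ≤ ∑ x ∈ s, ∑ y ∈ s, c x * c y * g (y - x) := by
  classical
  let c' : G →₀ ℝ := Finsupp.onFinset s (fun x => if x ∈ s then c x else 0) fun x hx => by
    by_contra h; simp [h] at hx
  have hsupp : c'.support ⊆ s := Finsupp.support_onFinset_subset
  have hzero : ∀ x, x ∉ c'.support → c' x = 0 := fun x => Finsupp.notMem_support_iff.mp
  calc (0 : ℝ) ≤ ∑ x ∈ c'.support, ∑ y ∈ c'.support, c' x * c' y * g (y - x) := hg c'
    _ = ∑ x ∈ s, ∑ y ∈ s, c' x * c' y * g (y - x) := by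
      rw [sum_subset hsupp fun x _ hx => by simp [hzero x hx]]
      refine sum_congr rfl fun x _ => sum_subset hsupp fun y _ hy => by simp [hzero y hy]
    _ = ∑ x ∈ s, ∑ y ∈ s, c x * c y * g (y - x) :=
      sum_congr rfl fun x hx => sum_congr rfl fun y hy => by simp [c', hx, hy]

theorem sum_sum_cos_mul_nonneg (hg : PosSemidefFun g) (θ : G →+ ℝ) (s : Finset G) :
    0 ≤ ∑ x ∈ s, ∑ y ∈ s, cos (θ (y - x)) * g (y - x) := by
  have hcos := hg.sum_sum_mul_nonneg s fun x => cos (θ x)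
  have hsin := hg.sum_sum_mul_nonneg s fun x => sin (θ x)
  calc (0 : ℝ) ≤ _ := add_nonneg hcos hsin
    _ = _ := by
      simp only [← sum_add_distrib, map_sub, cos_sub]
      exact sum_congr rfl fun x _ => sum_congr rfl fun y _ => by ring

end PosSemidefFun

def latticePairing (d : ℕ) (k : Fin d → ℝ) : (Fin d → ℤ) →+ ℝ where
  toFun R := ∑ j, k j * (R j : ℝ)
  map_zero' := by simp
  map_add' R R' := by simp [mul_add, sum_add_distrib]

theorem latticePairing_apply (d : ℕ) (k : Fin d → ℝ) (R : Fin d → ℤ) :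
    latticePairing d k R = ∑ j, k j * (R j : ℝ) := rfl

theorem Jhat_eq_sum_latticePairing (d : ℕ) (K : (Fin d → ℤ) →₀ ℝ) (k : Fin d → ℝ) :
    Jhat d K k = ∑ T ∈ K.support, K T * cos (latticePairing d k T) := rfl

def gridFreq {d : ℕ} (M : ℕ) (m : Fin d → Fin M) : Fin d → ℝ := fun j => 2 * π * m j / M

theorem sum_cexp_two_pi_mul_I_div (M : ℕ) (hM : M ≠ 0) (s : ℤ) :
    ∑ a : Fin M, Complex.exp (2 * π * Complex.I * (a : ℕ) * s / M) =
      if (M : ℤ) ∣ s then (M : ℂ) else 0 := by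
  set ζ := Complex.exp (2 * π * Complex.I / M)
  have hζ : IsPrimitiveRoot ζ M := Complex.isPrimitiveRoot_exp M hM
  have hpow : ∀ a : ℕ, Complex.exp (2 * π * Complex.I * a * s / M) = (ζ ^ s) ^ a := by
    intro a
    rw [← Complex.exp_int_mul, ← Complex.exp_nat_mul]
    ring_nf
  simp_rw [Fin.sum_univ_eq_sum_range (fun a => Complex.exp (2 * π * Complex.I * a * s / M)), hpow]
  split_ifs with hs
  · simp [(hζ.zpow_eq_one_iff_dvd s).mpr hs]
  · have hne : ζ ^ s ≠ 1 := fun h => hs ((hζ.zpow_eq_one_iff_dvd s).mp h)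
    rw [geom_sum_eq hne, ← zpow_natCast, ← zpow_mul, mul_comm, zpow_mul, zpow_natCast,
      hζ.pow_eq_one, one_zpow, sub_self, zero_div]

theorem sum_cos_latticePairing_gridFreq {d M : ℕ} (hM : M ≠ 0) (S : Fin d → ℤ)
    (hS : ∀ j, |S j| < M) :
    ∑ m : Fin d → Fin M, cos (latticePairing d (gridFreq M m) S) =
      if S = 0 then (M : ℝ) ^ d else 0 := by
  have hexp : ∀ m : Fin d → Fin M,
      Complex.exp (latticePairing d (gridFreq M m) S * Complex.I) =
        ∏ j, Complex.exp (2 * π * Complex.I * (m j : ℕ) * S j / M) := by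
    intro m
    rw [← Complex.exp_sum, latticePairing_apply, Complex.ofReal_sum, sum_mul]
    refine congrArg _ (sum_congr rfl fun j _ => ?_)
    simp only [gridFreq]; push_cast; ring
  have hdvd : ∀ j, (M : ℤ) ∣ S j ↔ S j = 0 := fun j =>
    ⟨fun h => Int.eq_zero_of_abs_lt_dvd h (hS j), fun h => h ▸ dvd_zero _⟩
  simp_rw [← Complex.exp_ofReal_mul_I_re]
  rw [← Complex.re_sum]
  simp_rw [hexp]
  rw [← Fintype.prod_sum fun j (a : Fin M) => Complex.exp (2 * π * Complex.I * (a : ℕ) * S j / M)]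
  simp_rw [sum_cexp_two_pi_mul_I_div M hM, hdvd, Fintype.prod_ite_zero, ← funext_iff,
    Pi.zero_def]
  split_ifs <;> simp [← Complex.ofReal_natCast, ← Complex.ofReal_pow]

theorem sum_Jhat_gridFreq_mul_cos {d M : ℕ} (hM : M ≠ 0) (K : (Fin d → ℤ) →₀ ℝ)
    (D : Fin d → ℤ) (hD : ∀ T ∈ K.support, ∀ j, |T j| + |D j| < M) :
    ∑ m : Fin d → Fin M, Jhat d K (gridFreq M m) * cos (latticePairing d (gridFreq M m) D) =
      (M : ℝ) ^ d * (K D + K (-D)) / 2 := by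
  classical
  have hinner : ∀ T ∈ K.support, ∑ m : Fin d → Fin M,
      cos (latticePairing d (gridFreq M m) T) * cos (latticePairing d (gridFreq M m) D) =
        ((if T = D then (M : ℝ) ^ d else 0) + if T = -D then (M : ℝ) ^ d else 0) / 2 := by
    intro T hT
    have hsub : ∀ j, |(T - D) j| < M := fun j => by
      have := abs_sub (T j) (D j); have := hD T hT j; simp only [Pi.sub_apply]; omega
    have hadd : ∀ j, |(T + D) j| < M := fun j => by
      have := abs_add_le (T j) (D j); have := hD T hT j; simp only [Pi.add_apply]; omega
    have hcos : ∀ x y : ℝ, cos x * cos y = (cos (x - y) + cos (x + y)) / 2 := fun x y => by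
      rw [← two_mul_cos_mul_cos]; ring
    simp_rw [hcos, ← map_sub, ← map_add, ← sum_div, sum_add_distrib,
      sum_cos_latticePairing_gridFreq hM _ hsub, sum_cos_latticePairing_gridFreq hM _ hadd,
      sub_eq_zero, add_eq_zero_iff_eq_neg]
  simp_rw [Jhat_eq_sum_latticePairing, sum_mul, mul_assoc]
  rw [sum_comm]
  simp_rw [← mul_sum]
  rw [sum_congr rfl fun T hT => congrArg _ (hinner T hT)]
  simp_rw [mul_div_assoc', mul_add, mul_ite, mul_zero, ← sum_div, sum_add_distrib, sum_ite_eq',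
    Finsupp.mem_support_iff]
  split_ifs <;> simp_all [mul_comm]

theorem sum_sum_mul_nonneg_of_Jhat_nonneg {d : ℕ} {g : (Fin d → ℤ) → ℝ} (hg : PosSemidefFun g)
    (K : (Fin d → ℤ) →₀ ℝ) (hK : ∀ R, K (-R) = K R) (hKhat : ∀ k, 0 ≤ Jhat d K k)
    (s : Finset (Fin d → ℤ)) :
    0 ≤ ∑ x ∈ s, ∑ y ∈ s, K (y - x) * g (y - x) := by
  classical
  obtain ⟨B, hB⟩ := ((K.support ∪ s).biUnion fun T => univ.image fun j => (T j).natAbs).exists_le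
  have hbound : ∀ T ∈ K.support ∪ s, ∀ j, |T j| ≤ B := fun T hT j => by
    have := hB _ (mem_biUnion.mpr ⟨T, hT, mem_image_of_mem _ (mem_univ j)⟩)
    rw [Int.abs_eq_natAbs]; omega
  -- `|T j| + |(y - x) j| ≤ 3 * B < M`, so the grid resolves every `T ± (y - x)`.
  set M := 3 * B + 1
  have hM : M ≠ 0 := by omega
  have hinv : ∀ x ∈ s, ∀ y ∈ s, (M : ℝ) ^ d * K (y - x) = ∑ m : Fin d → Fin M,
      Jhat d K (gridFreq M m) * cos (latticePairing d (gridFreq M m) (y - x)) := by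
    intro x hx y hy
    rw [sum_Jhat_gridFreq_mul_cos hM K (y - x), hK]
    · ring
    intro T hT j
    have := hbound T (mem_union_left _ hT) j
    have := hbound x (mem_union_right _ hx) j
    have := hbound y (mem_union_right _ hy) j
    simp only [Pi.sub_apply]
    cases abs_cases (y j - x j) <;> cases abs_cases (x j) <;> cases abs_cases (y j) <;> omega
  have hscaled : 0 ≤ (M : ℝ) ^ d * ∑ x ∈ s, ∑ y ∈ s, K (y - x) * g (y - x) :=
    calc (0 : ℝ) ≤ ∑ m : Fin d → Fin M, Jhat d K (gridFreq M m) *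
          ∑ x ∈ s, ∑ y ∈ s, cos (latticePairing d (gridFreq M m) (y - x)) * g (y - x) :=
        sum_nonneg fun m _ => mul_nonneg (hKhat _) (hg.sum_sum_cos_mul_nonneg _ s)
      _ = (M : ℝ) ^ d * ∑ x ∈ s, ∑ y ∈ s, K (y - x) * g (y - x) := by
        simp_rw [mul_sum]
        rw [sum_comm]
        refine sum_congr rfl fun x hx => ?_
        rw [sum_comm]
        refine sum_congr rfl fun y hy => ?_
        rw [← mul_assoc, hinv x hx y hy, sum_mul]
        exact sum_congr rfl fun m _ => by ring
  exact nonneg_of_mul_nonneg_right (by simpa [mul_comm] using hscaled) (by positivity)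

theorem sum_sum_sub_eq_sum_mul_card {G : Type*} [AddCommGroup G] [DecidableEq G]
    (s F : Finset G) (f : G → ℝ) (hf : ∀ T ∉ F, f T = 0) :
    ∑ x ∈ s, ∑ y ∈ s, f (y - x) = ∑ T ∈ F, f T * #{x ∈ s | x + T ∈ s} := by
  have hrow : ∀ x, ∑ y ∈ s, f (y - x) = ∑ T ∈ F, if x + T ∈ s then f T else 0 := by
    intro x
    calc ∑ y ∈ s, f (y - x) = ∑ y ∈ s, ∑ T ∈ F, if y - x = T then f T else 0 := by
          refine sum_congr rfl fun y _ => ?_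
          rw [sum_ite_eq]
          split_ifs with h
          · rfl
          · exact hf _ h
      _ = ∑ T ∈ F, if x + T ∈ s then f T else 0 := by
          rw [sum_comm]
          refine sum_congr rfl fun T _ => ?_
          simp_rw [sub_eq_iff_eq_add', sum_ite_eq']
  simp_rw [hrow]
  rw [sum_comm]
  refine sum_congr rfl fun T _ => ?_
  rw [← sum_filter, sum_const, nsmul_eq_mul, mul_comm]

def cube (d N : ℕ) : Finset (Fin d → ℤ) := Fintype.piFinset fun _ => Ico 0 (N : ℤ)

theorem card_filter_add_mem_Ico (N : ℕ) (t : ℤ) (ht : |t| ≤ N) :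
    (#{a ∈ Ico (0 : ℤ) N | a + t ∈ Ico (0 : ℤ) N} : ℤ) = N - |t| := by
  have : {a ∈ Ico (0 : ℤ) N | a + t ∈ Ico (0 : ℤ) N} = Ico (max 0 (-t)) (min N (N - t)) := by
    ext a; simp only [mem_filter, mem_Ico]; omega
  rw [this, Int.card_Ico]
  cases abs_cases t <;> omega

theorem card_filter_add_mem_cube (d N : ℕ) (T : Fin d → ℤ) (hT : ∀ j, |T j| ≤ N) :
    (#{x ∈ cube d N | x + T ∈ cube d N} : ℝ) = ∏ j, ((N : ℝ) - |(T j : ℝ)|) := by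
  have : {x ∈ cube d N | x + T ∈ cube d N} =
      Fintype.piFinset fun j => {a ∈ Ico (0 : ℤ) N | a + T j ∈ Ico (0 : ℤ) N} := by
    ext x; simp only [cube, mem_filter, Fintype.mem_piFinset, forall_and, Pi.add_apply]
  rw [this, Fintype.card_piFinset]
  push_cast
  refine prod_congr rfl fun j _ => ?_
  exact_mod_cast card_filter_add_mem_Ico N (T j) (hT j)

theorem tendsto_card_filter_add_mem_cube_div (d : ℕ) (T : Fin d → ℤ) :
    Tendsto (fun N : ℕ => (#{x ∈ cube d N | x + T ∈ cube d N} : ℝ) / (N : ℝ) ^ d)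
      atTop (𝓝 1) := by
  obtain ⟨B, hB⟩ := (univ.image fun j => |T j|).exists_le
  have hlim : Tendsto (fun N : ℕ => ∏ j, (1 - |(T j : ℝ)| / N)) atTop (𝓝 1) := by
    simpa using tendsto_finsetProd univ fun j _ =>
      (tendsto_const_div_atTop_nhds_zero_nat |(T j : ℝ)|).const_sub 1
  refine hlim.congr' (eventually_atTop.mpr ⟨B.toNat + 1, fun N hN => ?_⟩)
  have hT : ∀ j, |T j| ≤ N := fun j => by
    have := hB _ (mem_image_of_mem _ (mem_univ j)); omega
  have hN : (N : ℝ) ≠ 0 := by norm_cast; omega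
  dsimp only
  rw [card_filter_add_mem_cube d N T hT, ← Fin.prod_const, ← prod_div_distrib]
  exact prod_congr rfl fun j _ => by field_simp

theorem sum_support_mul_nonneg_of_Jhat_nonneg {d : ℕ} {g : (Fin d → ℤ) → ℝ}
    (hg : PosSemidefFun g) (K : (Fin d → ℤ) →₀ ℝ) (hK : ∀ R, K (-R) = K R)
    (hKhat : ∀ k, 0 ≤ Jhat d K k) :
    0 ≤ ∑ T ∈ K.support, K T * g T := by
  classical
  have hcube : ∀ N : ℕ, 0 ≤ ∑ T ∈ K.support,
      K T * g T * ((#{x ∈ cube d N | x + T ∈ cube d N} : ℝ) / (N : ℝ) ^ d) := by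
    intro N
    have hpos := sum_sum_mul_nonneg_of_Jhat_nonneg hg K hK hKhat (cube d N)
    rw [sum_sum_sub_eq_sum_mul_card (cube d N) K.support (fun T => K T * g T)
      fun T hT => by simp [Finsupp.notMem_support_iff.mp hT]] at hpos
    simp_rw [mul_div_assoc', ← sum_div]
    positivity
  have hlim := tendsto_finsetSum K.support fun T _ =>
    (tendsto_card_filter_add_mem_cube_div d T).const_mul (K T * g T)
  simpa using ge_of_tendsto' hlim hcube

theorem sum_support_sub_single_mul {α : Type*} (J : α →₀ ℝ) (a : α) (m : ℝ) (φ : α → ℝ) :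
    ∑ T ∈ (J - Finsupp.single a m).support, (J - Finsupp.single a m) T * φ T =
      ∑ T ∈ J.support, J T * φ T - m * φ a := by
  have h : ∀ K : α →₀ ℝ, ∑ T ∈ K.support, K T * φ T = Finsupp.linearCombination ℝ φ K :=
    fun K => by simp [Finsupp.linearCombination_apply, Finsupp.sum]
  rw [h, h, map_sub, Finsupp.linearCombination_single, smul_eq_mul]

theorem Jhat_sub_single_zero (d : ℕ) (J : (Fin d → ℤ) →₀ ℝ) (m : ℝ) (k : Fin d → ℝ) :
    Jhat d (J - Finsupp.single 0 m) k = Jhat d J k - m := by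
  rw [Jhat_eq_sum_latticePairing, sum_support_sub_single_mul, map_zero, cos_zero, mul_one]
  rfl

theorem bddBelow_range_Jhat (d : ℕ) (J : (Fin d → ℤ) →₀ ℝ) : BddBelow (Set.range (Jhat d J)) := by
  refine ⟨-∑ R ∈ J.support, |J R|, ?_⟩
  rintro _ ⟨k, rfl⟩
  rw [← sum_neg_distrib]
  refine sum_le_sum fun R _ => ?_
  calc -|J R| ≤ -|J R * cos (∑ j, k j * (R j : ℝ))| := by
        rw [abs_mul, neg_le_neg_iff]
        exact mul_le_of_le_one_right (abs_nonneg _) (abs_cos_le_one _)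
    _ ≤ _ := neg_abs_le _

/-- **Luttinger–Tisza lower bound from positive definiteness (Bochner step)**: if
`g : ℤ^d → ℝ` is a positive semidefinite function with `g(0) = 1` and `J` is a finitely
supported symmetric coupling, then `Σ_R J(R) g(R) ≥ inf_k Ĵ(k)`. -/
theorem luttinger_tisza_bochner (d : ℕ) (J : (Fin d → ℤ) →₀ ℝ)
    (hJ : ∀ R : Fin d → ℤ, J (-R) = J R)
    (g : (Fin d → ℤ) → ℝ)
    (hg : ∀ c : (Fin d → ℤ) →₀ ℝ,
      0 ≤ ∑ R ∈ c.support, ∑ R' ∈ c.support, c R * c R' * g (R' - R))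
    (hg0 : g 0 = 1) :
    sInf (Set.range (Jhat d J)) ≤ ∑ R ∈ J.support, J R * g R := by
  set m := sInf (Set.range (Jhat d J))
  have hm : ∀ k, m ≤ Jhat d J k := fun k => csInf_le (bddBelow_range_Jhat d J) ⟨k, rfl⟩
  set K := J - Finsupp.single 0 m
  have hK : ∀ R, K (-R) = K R := fun R => by
    simp only [K, Finsupp.coe_sub, Pi.sub_apply, hJ, Finsupp.single_eq_pi_single,
      Pi.single_apply, neg_eq_zero]
  have hKhat : ∀ k, 0 ≤ Jhat d K k := fun k => by
    rw [Jhat_sub_single_zero]; linarith [hm k]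
  have hpos := sum_support_mul_nonneg_of_Jhat_nonneg hg K hK hKhat
  rwa [sum_support_sub_single_mul, hg0, mul_one, sub_nonneg] at hpos
end
end

section
/- Luttinger–Tisza lower bound for periodic spin configurations: let N ≥ 1, let J : ℤ^d → ℝ be finitely supported with J(−R) = J(R), and let S : ℤ^d → ℝ³ satisfy ‖S_x‖ = 1 for all x and be N-periodic in each coordinate (S_{x + N e_j} = S_x for all x and each standard basis vector e_j). Then the energy density (1/N^d) Σ_{x ∈ {0,…,N−1}^d} Σ_{R ∈ ℤ^d} J(R) ⟨S_x, S_{x+R}⟩ ≥ min over m ∈ {0,…,N−1}^d of Ĵ(2πm/N), where Ĵ(k) := Σ_R J(R) cos(k·R). -/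
/-! Expanding each spin component in the characters `ψ` of the discrete torus `(ℤ/N)^d` turns
`N^d` times the energy `Σ_x Σ_R J(R) ⟨S_x, S_{x+R}⟩` into `Σ_ψ Ĵ(ψ) W(ψ)`, where
`Ĵ(ψ) = Σ_R J(R) Re ψ(R)` and `W(ψ) = Σ_c |Σ_x S_x^c ψ(x)|²` is the structure factor.
The weights `W(ψ)` are nonnegative and, by Parseval and `‖S_x‖ = 1`, add up to `N^{2d}`, so the
energy density is at least `min_ψ Ĵ(ψ)`. Every character of `(ℤ/N)^d` is `x ↦ exp(2πi m·x/N)`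
for some `m ∈ {0,…,N-1}^d`, and there `Ĵ(ψ) = Ĵ(2πm/N)`. -/

noncomputable section

open Finset Complex

section Fourier

variable {G : Type*} [AddCommGroup G] [Fintype G]

theorem AddChar.sum_apply_mul_normSq_sum (f : G → ℝ) (a : G) :
    ∑ ψ : AddChar G ℂ, ψ a * Complex.normSq (∑ x, f x * ψ x) =
      ((Fintype.card G * ∑ x, f x * f (x + a) : ℝ) : ℂ) := by
  classical
  have hψ (ψ : AddChar G ℂ) : ψ a * Complex.normSq (∑ x, f x * ψ x) =
      ∑ x, ∑ y, (f x * f y : ℝ) * ψ (a + x - y) := by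
    rw [← Complex.mul_conj, map_sum, sum_mul_sum, mul_sum]
    refine sum_congr rfl fun x _ => ?_
    rw [mul_sum]
    refine sum_congr rfl fun y _ => ?_
    rw [sub_eq_add_neg, AddChar.map_add_eq_mul, AddChar.map_add_eq_mul, AddChar.map_neg_eq_conj]
    simp only [map_mul, Complex.conj_ofReal]
    push_cast
    ring
  simp_rw [hψ]
  rw [sum_comm]
  refine (sum_congr rfl fun x _ => sum_comm).trans ?_
  simp_rw [← mul_sum, AddChar.sum_apply_eq_ite, sub_eq_zero, mul_ite, mul_zero]
  simp only [sum_ite_eq, mem_univ, if_true, add_comm a]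
  push_cast
  rw [← sum_mul, mul_comm]

variable {ι : Type*} [Fintype ι]

def structureFactor (s : G → EuclideanSpace ℝ ι) (ψ : AddChar G ℂ) : ℝ :=
  ∑ c, Complex.normSq (∑ x, s x c * ψ x)

theorem structureFactor_nonneg (s : G → EuclideanSpace ℝ ι) (ψ : AddChar G ℂ) :
    0 ≤ structureFactor s ψ :=
  sum_nonneg fun _ _ => Complex.normSq_nonneg _

theorem sum_re_apply_mul_structureFactor (s : G → EuclideanSpace ℝ ι) (a : G) :
    ∑ ψ : AddChar G ℂ, (ψ a).re * structureFactor s ψ =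
      Fintype.card G * ∑ x, inner ℝ (s x) (s (x + a)) := by
  have hc (c : ι) := congrArg Complex.re (AddChar.sum_apply_mul_normSq_sum (fun x => s x c) a)
  simp only [Complex.re_sum, Complex.re_mul_ofReal, Complex.ofReal_re] at hc
  simp only [structureFactor, PiLp.inner_apply, mul_sum]
  rw [sum_comm]
  simp_rw [hc, mul_sum]
  rw [sum_comm]
  simp [mul_comm]

theorem sum_structureFactor (s : G → EuclideanSpace ℝ ι) :
    ∑ ψ : AddChar G ℂ, structureFactor s ψ = Fintype.card G * ∑ x, ‖s x‖ ^ 2 := by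
  simpa [real_inner_self_eq_norm_sq] using sum_re_apply_mul_structureFactor s 0

theorem exists_addChar_mul_sum_norm_sq_le {κ : Type*} (s : G → EuclideanSpace ℝ ι)
    (T : Finset κ) (w : κ → ℝ) (a : κ → G) :
    ∃ ψ : AddChar G ℂ, (∑ R ∈ T, w R * (ψ (a R)).re) * ∑ x, ‖s x‖ ^ 2 ≤
      ∑ x, ∑ R ∈ T, w R * inner ℝ (s x) (s (x + a R)) := by
  set symbol : AddChar G ℂ → ℝ := fun ψ => ∑ R ∈ T, w R * (ψ (a R)).re
  obtain ⟨ψ₀, -, hmin⟩ := exists_min_image univ symbol univ_nonempty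
  refine ⟨ψ₀, le_of_mul_le_mul_left ?_ (Nat.cast_pos.mpr (Fintype.card_pos (α := G)))⟩
  calc (Fintype.card G : ℝ) * (symbol ψ₀ * ∑ x, ‖s x‖ ^ 2)
      = ∑ ψ, symbol ψ₀ * structureFactor s ψ := by
        rw [← mul_sum, sum_structureFactor]; ring
    _ ≤ ∑ ψ, symbol ψ * structureFactor s ψ :=
        sum_le_sum fun ψ _ => mul_le_mul_of_nonneg_right (hmin ψ (mem_univ ψ))
          (structureFactor_nonneg s ψ)
    _ = Fintype.card G * ∑ x, ∑ R ∈ T, w R * inner ℝ (s x) (s (x + a R)) := by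
        simp_rw [symbol, sum_mul, mul_assoc]
        rw [sum_comm]
        simp_rw [← mul_sum, sum_re_apply_mul_structureFactor, mul_sum, mul_left_comm (w _)]
        rw [sum_comm]

end Fourier

theorem AddChar.map_sum_eq_prod {A M κ : Type*} [AddCommMonoid A] [CommMonoid M]
    (ψ : AddChar A M) (T : Finset κ) (f : κ → A) : ψ (∑ i ∈ T, f i) = ∏ i ∈ T, ψ (f i) := by
  induction T using Finset.cons_induction with
  | empty => simp
  | cons i T hi ih => rw [sum_cons, prod_cons, map_add_eq_mul, ih]

theorem AddChar.exists_apply_intCast_eq_exp {N : ℕ} [NeZero N] (ψ : AddChar (ZMod N) ℂ) :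
    ∃ k : Fin N, ∀ y : ℤ, ψ y = exp (↑(2 * Real.pi * k / N * y) * I) := by
  have hN : ψ 1 ^ N = 1 := by
    rw [← AddChar.map_nsmul_eq_pow, nsmul_one, ZMod.natCast_self, map_zero_eq_one]
  obtain ⟨k, hk, hψ⟩ := (isPrimitiveRoot_exp N (NeZero.ne N)).eq_pow_of_pow_eq_one hN
  refine ⟨⟨k, hk⟩, fun y => ?_⟩
  rw [← zsmul_one, map_zsmul_eq_zpow, ← hψ, ← exp_nat_mul, ← exp_int_mul]
  congr 1
  push_cast
  ring

theorem AddChar.exists_apply_intCast_eq_exp_sum {d N : ℕ} [NeZero N]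
    (ψ : AddChar (Fin d → ZMod N) ℂ) :
    ∃ m : Fin d → Fin N, ∀ R : Fin d → ℤ,
      ψ (fun i => R i) = exp (↑(∑ j, 2 * Real.pi * m j / N * R j) * I) := by
  choose m hm using fun j =>
    (ψ.compAddMonoidHom (AddMonoidHom.single _ j)).exists_apply_intCast_eq_exp
  refine ⟨m, fun R => ?_⟩
  rw [← univ_sum_single (fun i => (R i : ZMod N)), map_sum_eq_prod, ofReal_sum, sum_mul, exp_sum]
  exact prod_congr rfl fun j _ => hm j (R j)

theorem AddSubgroup.apply_add_eq_of_mem_closure {H E : Type*} [AddGroup H] {f : H → E} {P : Set H}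
    (hP : ∀ p ∈ P, ∀ x, f (x + p) = f x) {q : H} (hq : q ∈ AddSubgroup.closure P) (x : H) :
    f (x + q) = f x := by
  induction hq using AddSubgroup.closure_induction generalizing x with
  | mem p hp => exact hP p hp x
  | zero => rw [add_zero]
  | add p q _ _ hp hq => rw [← add_assoc, hq, hp]
  | neg p _ hp => rw [← hp (x + -p), neg_add_cancel_right]

theorem apply_eq_of_intCast_eq {E : Type*} {d N : ℕ} {S : (Fin d → ℤ) → E}
    (hper : ∀ (x : Fin d → ℤ) (j : Fin d), S (x + fun i => if i = j then (N : ℤ) else 0) = S x)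
    {z w : Fin d → ℤ} (h : ∀ i, (z i : ZMod N) = w i) : S z = S w := by
  choose k hk using fun i => (ZMod.intCast_eq_intCast_iff_dvd_sub (w i) (z i) N).mp (h i).symm
  have hzw : z - w = ∑ j, k j • fun i => if i = j then (N : ℤ) else 0 := by
    ext i
    simp [Finset.sum_apply, hk i, mul_comm]
  have hmem : z - w ∈ AddSubgroup.closure (Set.range fun j i => if i = j then (N : ℤ) else 0) :=
    hzw ▸ AddSubgroup.sum_mem _ fun j _ =>
      AddSubgroup.zsmul_mem _ (AddSubgroup.subset_closure (Set.mem_range_self j)) _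
  have := AddSubgroup.apply_add_eq_of_mem_closure (by rintro _ ⟨j, rfl⟩; exact (hper · j)) hmem w
  rwa [add_sub_cancel] at this

theorem ZMod.natCast_fin_bijective (N : ℕ) [NeZero N] :
    Function.Bijective fun k : Fin N => ((k : ℕ) : ZMod N) := by
  refine (Fintype.bijective_iff_injective_and_card _).mpr ⟨fun a b h => Fin.ext ?_, by simp⟩
  simpa [ZMod.val_cast_of_lt a.isLt, ZMod.val_cast_of_lt b.isLt] using congrArg ZMod.val h

theorem luttinger_tisza_periodic_general (d N : ℕ) (hN : 1 ≤ N)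
    (J : (Fin d → ℤ) →₀ ℝ)
    (S : (Fin d → ℤ) → EuclideanSpace ℝ (Fin 3))
    (hunit : ∀ x, ‖S x‖ = 1)
    (hper : ∀ (x : Fin d → ℤ) (j : Fin d),
      S (x + fun i => if i = j then (N : ℤ) else 0) = S x) :
    ∃ m : Fin d → Fin N,
      Jhat d J (fun j => 2 * Real.pi * (m j : ℝ) / N) ≤
        (1 / (N : ℝ) ^ d) * ∑ x : Fin d → Fin N, ∑ R ∈ J.support,
          J R * (inner ℝ (S fun i => ((x i : ℤ))) (S ((fun i => ((x i : ℤ))) + R)) : ℝ) := by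
  have : NeZero N := ⟨by omega⟩
  set s : (Fin d → ZMod N) → EuclideanSpace ℝ (Fin 3) := fun g => S fun i => ((g i).val : ℤ)
  have hS (z : Fin d → ℤ) : S z = s fun i => z i := apply_eq_of_intCast_eq hper fun i => by simp
  obtain ⟨ψ, hψ⟩ := exists_addChar_mul_sum_norm_sq_le s J.support J fun R i => (R i : ZMod N)
  obtain ⟨m, hm⟩ := ψ.exists_apply_intCast_eq_exp_sum
  refine ⟨m, ?_⟩
  have hsymbol : Jhat d J (fun j => 2 * Real.pi * (m j : ℝ) / N) =
      ∑ R ∈ J.support, J R * (ψ fun i => (R i : ZMod N)).re := by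
    simp only [Jhat, hm, exp_ofReal_mul_I_re]
  have hnorm : ∑ g, ‖s g‖ ^ 2 = (N : ℝ) ^ d := by simp [s, hunit]
  have henergy : ∑ x : Fin d → Fin N, ∑ R ∈ J.support,
      J R * inner ℝ (S fun i => ((x i : ℤ))) (S ((fun i => ((x i : ℤ))) + R)) =
      ∑ g, ∑ R ∈ J.support, J R * inner ℝ (s g) (s (g + fun i => (R i : ZMod N))) := by
    refine Fintype.sum_bijective _ (Function.Bijective.piMap fun _ => ZMod.natCast_fin_bijective N)
      _ _ fun x => ?_
    simp only [hS, Pi.add_apply, Int.cast_add, Int.cast_natCast]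
    rfl
  rw [hsymbol, henergy, one_div, inv_mul_eq_div, le_div_iff₀ (by positivity), ← hnorm]
  exact hψ

/-- **Luttinger–Tisza lower bound for periodic spin configurations**: the energy density of
any `N`-periodic unit spin configuration is bounded below by the minimum of `Ĵ` over the
commensurate wavevectors `2πm/N`, `m ∈ {0,…,N−1}^d`. -/
theorem luttinger_tisza_periodic (d N : ℕ) (hN : 1 ≤ N)
    (J : (Fin d → ℤ) →₀ ℝ) (hJ : ∀ R : Fin d → ℤ, J (-R) = J R)
    (S : (Fin d → ℤ) → EuclideanSpace ℝ (Fin 3))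
    (hunit : ∀ x, ‖S x‖ = 1)
    (hper : ∀ (x : Fin d → ℤ) (j : Fin d),
      S (x + fun i => if i = j then (N : ℤ) else 0) = S x) :
    ∃ m : Fin d → Fin N,
      Jhat d J (fun j => 2 * Real.pi * (m j : ℝ) / N) ≤
        (1 / (N : ℝ) ^ d) * ∑ x : Fin d → Fin N, ∑ R ∈ J.support,
          J R * (inner ℝ (S fun i => ((x i : ℤ))) (S ((fun i => ((x i : ℤ))) + R)) : ℝ) :=
  luttinger_tisza_periodic_general d N hN J S hunit hper
end
end
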